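/- arXiv:1904.05995 — 2 statements merged into one kernel-verified Lean document; each statement's English description precedes it below -/
import Mathlib

section
/- For a finite graph G with n vertices, m edges, and κ connected components, the sum over all edges {u,v} of (1 - R_{u,v}(G)) equals the circuit rank m - n + κ, where R_{u,v}(G) is the effective resistance between the endpoints of each edge within its connected component. -/
open Matrix

/-- Effective resistance, defined via the graph Laplacian (Dirichlet principle): the inverse
of the minimum Dirichlet energy `φᵀ L φ` over potentials with `φ s = 1`, `φ t = 0`.
For vertices in the same connected component this is the usual effective resistance
within that component. -/
noncomputable def effRes {V : Type*} [Fintype V] [DecidableEq V] (G : SimpleGraph V)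
    [DecidableRel G.Adj] (s t : V) : ℝ :=
  (sInf {E : ℝ | ∃ φ : V → ℝ, φ s = 1 ∧ φ t = 0 ∧ E = φ ⬝ᵥ (G.lapMatrix ℝ *ᵥ φ)})⁻¹

/-- The circuit rank of a graph: `m - n + κ`. -/
noncomputable def circuitRank {V : Type*} (G : SimpleGraph V) : ℤ :=
  (G.edgeSet.ncard : ℤ) - (Nat.card V : ℤ) + (Nat.card G.ConnectedComponent : ℤ)

namespace FosterAux

section CS

/-- Cauchy–Schwarz for a positive semidefinite real matrix. -/
lemma psd_cauchy_schwarz {n : Type*} [Fintype n] {A : Matrix n n ℝ} (hA : A.PosSemidef)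
    (x y : n → ℝ) : (x ⬝ᵥ (A *ᵥ y)) ^ 2 ≤ (x ⬝ᵥ (A *ᵥ x)) * (y ⬝ᵥ (A *ᵥ y)) := by
  have hAT : Aᵀ = A := by
    rw [← Matrix.conjTranspose_eq_transpose_of_trivial]; exact hA.1
  have hsymm : ∀ u v : n → ℝ, u ⬝ᵥ (A *ᵥ v) = v ⬝ᵥ (A *ᵥ u) := by
    intro u v
    rw [dotProduct_mulVec, ← Matrix.mulVec_transpose, hAT, dotProduct_comm]
  have key : ∀ t : ℝ, 0 ≤ (y ⬝ᵥ (A *ᵥ y)) * (t * t) + (2 * (x ⬝ᵥ (A *ᵥ y))) * t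
      + (x ⬝ᵥ (A *ᵥ x)) := by
    intro t
    have h0 := hA.dotProduct_mulVec_nonneg (x + t • y)
    simp only [star_trivial, mulVec_add, mulVec_smul, dotProduct_add, add_dotProduct,
      dotProduct_smul, smul_dotProduct, smul_eq_mul] at h0
    have hxy := hsymm x y
    rw [show y ⬝ᵥ (A *ᵥ x) = x ⬝ᵥ (A *ᵥ y) from (hsymm x y).symm] at h0
    ring_nf at h0 ⊢
    linarith
  have hd := discrim_le_zero key
  rw [discrim] at hd
  nlinarith [hd]

end CS

variable {n : Type*} [Fintype n] [DecidableEq n]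

section conj
variable (U : Matrix n n ℝ)

/-- Conjugation of a diagonal matrix by `U`. -/
noncomputable def conj (f : n → ℝ) : Matrix n n ℝ := U * diagonal f * star U

variable (hU : star U * U = 1)
include hU

lemma conj_mul (f g : n → ℝ) : conj U f * conj U g = conj U (fun i => f i * g i) := by
  unfold conj
  calc (U * diagonal f * star U) * (U * diagonal g * star U)
      = U * (diagonal f * (star U * U) * diagonal g) * star U := by noncomm_ring
    _ = _ := by rw [hU, mul_one, diagonal_mul_diagonal]

lemma trace_conj (f : n → ℝ) : (conj U f).trace = ∑ i, f i := by
  unfold conj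
  rw [Matrix.trace_mul_cycle, hU, one_mul, Matrix.trace_diagonal]

omit hU in
lemma conj_transpose_eq (f : n → ℝ) : (conj U f)ᵀ = conj U f := by
  unfold conj
  have : star U = Uᵀ := rfl
  rw [this, Matrix.transpose_mul, Matrix.transpose_mul, transpose_transpose,
    diagonal_transpose, mul_assoc]

omit hU in
lemma conj_apply_symm (f : n → ℝ) (i j : n) : conj U f i j = conj U f j i := by
  conv_lhs => rw [← conj_transpose_eq U f]
  rfl

/-- `U` is also co-unitary. -/
lemma mul_star_eq_one : U * star U = 1 := mul_eq_one_comm.mp hU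

/-- Projection property: if `x` is orthogonal to the kernel of `conj U f`, then the
projection `conj U ind` fixes `x`, where `ind` is the indicator of nonzero values of `f`. -/
lemma proj_fix (f : n → ℝ) (x : n → ℝ)
    (hx : ∀ y : n → ℝ, conj U f *ᵥ y = 0 → x ⬝ᵥ y = 0) :
    conj U (fun i => if f i = 0 then 0 else 1) *ᵥ x = x := by
  have hU' := mul_star_eq_one U hU
  -- coordinates of x
  set z : n → ℝ := star U *ᵥ x with hz
  have hxz : U *ᵥ z = x := by
    rw [hz, mulVec_mulVec, hU', one_mulVec]
  -- for i with f i = 0, z i = 0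
  have hzero : ∀ i, f i = 0 → z i = 0 := by
    intro i hfi
    have hy : conj U f *ᵥ (U *ᵥ Pi.single i 1) = 0 := by
      unfold conj
      rw [mulVec_mulVec, mul_assoc (U * diagonal f), hU, mul_one]
      funext j
      simp [mulVec_single, Matrix.mul_diagonal, hfi]
    have hx0 := hx _ hy
    rw [hz]
    rw [← hx0]
    simp only [mulVec, dotProduct, Matrix.star_apply, star_trivial]
    refine Finset.sum_congr rfl fun j _ => ?_
    rw [Finset.sum_eq_single i (by intro b _ hb; simp [Pi.single_apply, hb]) (by simp)]
    simp [mul_comm]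
  -- conclude
  have : diagonal (fun i => if f i = 0 then (0:ℝ) else 1) *ᵥ z = z := by
    funext i
    by_cases hfi : f i = 0
    · simp [mulVec_diagonal, hfi, hzero i hfi]
    · simp [mulVec_diagonal, hfi]
  unfold conj
  rw [← mulVec_mulVec, ← mulVec_mulVec, ← hz, this, hxz]

end conj

section Graph

open SimpleGraph

variable {V : Type*} [Fintype V] [DecidableEq V] (G : SimpleGraph V) [DecidableRel G.Adj]

/-- The Laplacian is Hermitian. -/
noncomputable def hLap : (G.lapMatrix ℝ).IsHermitian := (posSemidef_lapMatrix ℝ G).1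

/-- Eigenvector unitary of the Laplacian. -/
noncomputable def Um : Matrix V V ℝ := ((hLap G).eigenvectorUnitary : Matrix V V ℝ)

/-- Eigenvalues of the Laplacian. -/
noncomputable def μm : V → ℝ := (hLap G).eigenvalues

/-- Pseudoinverse of the Laplacian. -/
noncomputable def Hm : Matrix V V ℝ := conj (Um G) (fun i => (μm G i)⁻¹)

lemma hUm : star (Um G) * Um G = 1 :=
  (Matrix.mem_unitaryGroup_iff').mp ((hLap G).eigenvectorUnitary).2

lemma lap_eq_conj : G.lapMatrix ℝ = conj (Um G) (μm G) := by
  have := (hLap G).spectral_theorem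
  simpa [conj, Um, μm, Function.comp] using this

lemma lap_mul_Hm : G.lapMatrix ℝ * Hm G =
    conj (Um G) (fun i => if μm G i = 0 then 0 else 1) := by
  rw [lap_eq_conj G, Hm, conj_mul _ (hUm G)]
  have : (fun i => μm G i * (μm G i)⁻¹) = (fun i => if μm G i = 0 then (0:ℝ) else 1) := by
    funext i; by_cases h : μm G i = 0 <;> simp [h, mul_inv_cancel₀]
  rw [this]

lemma Hm_mul_lap_mul_Hm : Hm G * G.lapMatrix ℝ * Hm G = Hm G := by
  rw [lap_eq_conj G, Hm, conj_mul _ (hUm G), conj_mul _ (hUm G)]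
  have : (fun i => (μm G i)⁻¹ * μm G i * (μm G i)⁻¹) = fun i => (μm G i)⁻¹ := by
    funext i; by_cases h : μm G i = 0
    · simp [h]
    · rw [inv_mul_cancel₀ h, one_mul]
  rw [this]

lemma Hm_apply_symm (i j : V) : Hm G i j = Hm G j i := conj_apply_symm _ _ i j

lemma proj_lap_fix (x : V → ℝ) (hx : ∀ y : V → ℝ, G.lapMatrix ℝ *ᵥ y = 0 → x ⬝ᵥ y = 0) :
    (G.lapMatrix ℝ * Hm G) *ᵥ x = x := by
  rw [lap_mul_Hm]
  refine proj_fix (Um G) (hUm G) (μm G) x ?_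
  intro y hy
  exact hx y (by rw [lap_eq_conj G]; exact hy)

lemma rank_lap_add_card_cc :
    (G.lapMatrix ℝ).rank + Fintype.card G.ConnectedComponent = Fintype.card V := by
  rw [card_connectedComponent_eq_finrank_ker_toLin'_lapMatrix, Matrix.rank,
    ← Matrix.toLin'_apply']
  have := LinearMap.finrank_range_add_finrank_ker (Matrix.toLin' (G.lapMatrix ℝ))
  rw [this]
  simp [Module.finrank_pi]

lemma trace_lap_mul_Hm : (G.lapMatrix ℝ * Hm G).trace =
    (Fintype.card V : ℝ) - (Fintype.card G.ConnectedComponent : ℝ) := by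
  rw [lap_mul_Hm, trace_conj _ (hUm G)]
  have h1 : ∑ i, (if μm G i = 0 then (0:ℝ) else 1) =
      (Fintype.card {i // μm G i ≠ 0} : ℝ) := by
    rw [Fintype.card_subtype, ← Finset.sum_boole]
    exact Finset.sum_congr rfl fun i _ => by by_cases h : μm G i = 0 <;> simp [h]
  have h4 : (G.lapMatrix ℝ).rank = Fintype.card {i // μm G i ≠ 0} :=
    (hLap G).rank_eq_card_non_zero_eigs
  rw [h1, ← h4]
  have h2 := rank_lap_add_card_cc G
  have h3 := congrArg (Nat.cast (R := ℝ)) h2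
  push_cast at h3
  linarith

lemma single_sub_dotProduct (s t : V) (y : V → ℝ) :
    (Pi.single s 1 - Pi.single t 1) ⬝ᵥ y = y s - y t := by
  simp [sub_dotProduct, single_dotProduct]

lemma dot_lap_symm (x y : V → ℝ) :
    x ⬝ᵥ (G.lapMatrix ℝ *ᵥ y) = y ⬝ᵥ (G.lapMatrix ℝ *ᵥ x) := by
  have hAT : (G.lapMatrix ℝ)ᵀ = G.lapMatrix ℝ := G.isSymm_lapMatrix (R := ℝ)
  rw [dotProduct_mulVec, ← Matrix.mulVec_transpose, hAT, dotProduct_comm]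

lemma effRes_adj {s t : V} (h : G.Adj s t) :
    effRes G s t =
      (Pi.single s 1 - Pi.single t 1) ⬝ᵥ (Hm G *ᵥ (Pi.single s 1 - Pi.single t 1)) := by
  set L := G.lapMatrix ℝ with hLdef
  set a : V → ℝ := Pi.single s 1 - Pi.single t 1 with hadef
  set w : V → ℝ := Hm G *ᵥ a with hwdef
  set R : ℝ := a ⬝ᵥ w with hRdef
  have hker : ∀ y : V → ℝ, L *ᵥ y = 0 → a ⬝ᵥ y = 0 := by
    intro y hy
    have hreach : ∀ i j, G.Reachable i j → y i = y j := by
      rw [← SimpleGraph.lapMatrix_mulVec_eq_zero_iff_forall_reachable]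
      exact hy
    rw [single_sub_dotProduct, hreach s t h.reachable, sub_self]
  have hLw : L *ᵥ w = a := by
    rw [hwdef, Matrix.mulVec_mulVec]
    exact proj_lap_fix G a hker
  have hwLw : w ⬝ᵥ (L *ᵥ w) = R := by rw [hLw, dotProduct_comm, hRdef]
  have hane : a ⬝ᵥ a ≠ 0 := by
    have h1 : a s = 1 := by simp [hadef, Pi.single_apply, h.ne]
    intro h0
    have := dotProduct_self_eq_zero.mp h0
    rw [this] at h1; simp at h1
  have hRpos : 0 < R := by
    have hnn : 0 ≤ w ⬝ᵥ (L *ᵥ w) := by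
      simpa [star_trivial] using (posSemidef_lapMatrix ℝ G).dotProduct_mulVec_nonneg w
    rcases lt_or_eq_of_le (hwLw ▸ hnn) with h' | h'
    · exact h'
    · exfalso
      have h0 : w ⬝ᵥ (L *ᵥ w) = 0 := by rw [hwLw, ← h']
      have : L *ᵥ w = 0 := by
        have := (posSemidef_lapMatrix ℝ G).dotProduct_mulVec_zero_iff w
        rw [star_trivial] at this
        exact this.mp h0
      rw [this] at hLw
      exact hane (by rw [← hLw]; simp)
  -- the set of Dirichlet energies
  set S : Set ℝ := {E : ℝ | ∃ φ : V → ℝ, φ s = 1 ∧ φ t = 0 ∧ E = φ ⬝ᵥ (L *ᵥ φ)} with hSdef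
  have hws : w s - w t = R := by rw [hRdef, ← single_sub_dotProduct s t w]
  have hmem : R⁻¹ ∈ S := by
    refine ⟨R⁻¹ • w - (R⁻¹ * w t) • (fun _ : V => (1:ℝ)), ?_, ?_, ?_⟩
    · simp only [Pi.sub_apply, Pi.smul_apply, smul_eq_mul, mul_one]
      rw [← mul_sub, hws, inv_mul_cancel₀ (ne_of_gt hRpos)]
    · simp only [Pi.sub_apply, Pi.smul_apply, smul_eq_mul, mul_one]
      ring
    · have hE : L *ᵥ (R⁻¹ • w - (R⁻¹ * w t) • (fun _ : V => (1:ℝ))) = R⁻¹ • a := by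
        rw [Matrix.mulVec_sub, Matrix.mulVec_smul, Matrix.mulVec_smul, hLw,
          G.lapMatrix_mulVec_const_eq_zero]
        simp
      rw [hE, dotProduct_smul]
      have hφa : (R⁻¹ • w - (R⁻¹ * w t) • (fun _ : V => (1:ℝ))) ⬝ᵥ a = 1 := by
        rw [dotProduct_comm, single_sub_dotProduct]
        simp only [Pi.sub_apply, Pi.smul_apply, smul_eq_mul, mul_one]
        have : R⁻¹ * w s - R⁻¹ * w t - (R⁻¹ * w t - R⁻¹ * w t) = R⁻¹ * (w s - w t) := by ring
        rw [show R⁻¹ * w s - R⁻¹ * w t - (R⁻¹ * w t - R⁻¹ * w t) = R⁻¹ * (w s - w t) from by ring] at this ⊢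
        rw [hws, inv_mul_cancel₀ (ne_of_gt hRpos)]
      rw [smul_eq_mul, hφa, mul_one]
  have hlb : ∀ E ∈ S, R⁻¹ ≤ E := by
    rintro E ⟨φ, hφs, hφt, hφE⟩
    have haφ : a ⬝ᵥ φ = 1 := by rw [single_sub_dotProduct, hφs, hφt, sub_zero]
    have h1 : w ⬝ᵥ (L *ᵥ φ) = 1 := by
      rw [dot_lap_symm, hLw, dotProduct_comm, haφ]
    have hcs := psd_cauchy_schwarz (posSemidef_lapMatrix ℝ G) w φ
    rw [h1, hwLw] at hcs
    have hEnn : 0 ≤ E := by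
      rw [hφE]; simpa [star_trivial] using (posSemidef_lapMatrix ℝ G).dotProduct_mulVec_nonneg φ
    rw [hφE, hLdef, inv_eq_one_div, div_le_iff₀ hRpos]
    nlinarith
  have hinf : sInf S = R⁻¹ := le_antisymm (csInf_le ⟨R⁻¹, hlb⟩ hmem) (le_csInf ⟨_, hmem⟩ hlb)
  rw [effRes]
  rw [show {E : ℝ | ∃ φ : V → ℝ, φ s = 1 ∧ φ t = 0 ∧ E = φ ⬝ᵥ (G.lapMatrix ℝ *ᵥ φ)} = S from rfl]
  rw [hinf, inv_inv, hRdef]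


lemma dot_Hm_single (s t : V) :
    (Pi.single s 1 - Pi.single t 1) ⬝ᵥ (Hm G *ᵥ (Pi.single s 1 - Pi.single t 1)) =
      Hm G s s + Hm G t t - 2 * Hm G s t := by
  rw [single_sub_dotProduct]
  have hcol : ∀ u i : V, (Hm G *ᵥ Pi.single i 1) u = Hm G u i := by
    intro u i
    rw [Matrix.mulVec_single]
    simp
  rw [Matrix.mulVec_sub]
  simp only [Pi.sub_apply, hcol]
  rw [Hm_apply_symm G t s]
  ring

lemma sum_ite_adj_one :
    ∑ u, ∑ v, (if G.Adj u v then (1:ℝ) else 0) = 2 * (G.edgeFinset.card : ℝ) := by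
  have hdeg : ∀ u, ∑ v, (if G.Adj u v then (1:ℝ) else 0) = (G.degree u : ℝ) := by
    intro u
    rw [Finset.sum_boole, SimpleGraph.degree, neighborFinset_eq_filter]
  rw [Finset.sum_congr rfl fun u _ => hdeg u, ← Nat.cast_sum,
    SimpleGraph.sum_degrees_eq_twice_card_edges]
  push_cast; ring

lemma trace_lap_mul_Hm_expand : (G.lapMatrix ℝ * Hm G).trace =
    ∑ u, (G.degree u : ℝ) * Hm G u u - ∑ u, ∑ v, (if G.Adj u v then Hm G v u else 0) := by
  rw [Matrix.trace, ← Finset.sum_sub_distrib]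
  refine Finset.sum_congr rfl fun u _ => ?_
  rw [Matrix.diag_apply, Matrix.mul_apply]
  have hentry : ∀ v, G.lapMatrix ℝ u v * Hm G v u =
      (if u = v then (G.degree u : ℝ) else 0) * Hm G v u
        - (if G.Adj u v then Hm G v u else 0) := by
    intro v
    rw [SimpleGraph.lapMatrix, Matrix.sub_apply, SimpleGraph.degMatrix,
      Matrix.diagonal_apply, SimpleGraph.adjMatrix_apply, sub_mul]
    by_cases h : G.Adj u v <;> simp [h]
  rw [Finset.sum_congr rfl fun v _ => hentry v, Finset.sum_sub_distrib]
  congr 1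
  rw [Finset.sum_eq_single u (fun b _ hb => by simp [Ne.symm hb]) (by simp)]
  simp


end Graph

end FosterAux

open FosterAux

/-- The sum over all edges `{u,v}` of `1 - R_{u,v}(G)` equals the circuit rank
`m - n + κ`. (Each unordered edge appears twice in the double sum, whence the
factor `1/2`.) -/
theorem sum_one_sub_effRes_eq_circuitRank {V : Type*} [Fintype V] [DecidableEq V]
    (G : SimpleGraph V) [DecidableRel G.Adj] :
    (1 / 2 : ℝ) * ∑ u, ∑ v, (if G.Adj u v then 1 - effRes G u v else 0) =
      (circuitRank G : ℝ) := by
  classical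
  have hsummand : ∀ u v : V, (if G.Adj u v then 1 - effRes G u v else 0) =
      (if G.Adj u v then (1:ℝ) else 0)
      - ((if G.Adj u v then Hm G u u else 0)
        + (if G.Adj u v then Hm G v v else 0)
        - 2 * (if G.Adj u v then Hm G u v else 0)) := by
    intro u v
    by_cases h : G.Adj u v
    · simp only [if_pos h]
      rw [effRes_adj G h, dot_Hm_single G u v]
      try ring
    · simp [h]
  have hsplit : ∑ u, ∑ v, (if G.Adj u v then 1 - effRes G u v else 0) =
      (∑ u, ∑ v, (if G.Adj u v then (1:ℝ) else 0))
      - ((∑ u, ∑ v, (if G.Adj u v then Hm G u u else 0))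
        + (∑ u, ∑ v, (if G.Adj u v then Hm G v v else 0))
        - 2 * (∑ u, ∑ v, (if G.Adj u v then Hm G u v else 0))) := by
    rw [Finset.sum_congr rfl fun u _ => Finset.sum_congr rfl fun v _ => hsummand u v]
    simp only [Finset.sum_sub_distrib, Finset.sum_add_distrib, ← Finset.mul_sum]
  -- S2 : sum of H u u weighted by degree
  have hS2 : ∑ u, ∑ v, (if G.Adj u v then Hm G u u else 0)
      = ∑ u, (G.degree u : ℝ) * Hm G u u := by
    refine Finset.sum_congr rfl fun u _ => ?_
    have : ∀ v, (if G.Adj u v then Hm G u u else 0)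
        = (if G.Adj u v then (1:ℝ) else 0) * Hm G u u := by
      intro v; by_cases h : G.Adj u v <;> simp [h]
    have hdeg : (Finset.filter (fun x => G.Adj u x) Finset.univ).card = G.degree u := by
      rw [← SimpleGraph.neighborFinset_eq_filter]; rfl
    rw [Finset.sum_congr rfl fun v _ => this v, ← Finset.sum_mul, Finset.sum_boole, hdeg]
  have hS3 : ∑ u, ∑ v, (if G.Adj u v then Hm G v v else 0)
      = ∑ u, (G.degree u : ℝ) * Hm G u u := by
    calc ∑ u, ∑ v, (if G.Adj u v then Hm G v v else 0)
        = ∑ v, ∑ u, (if G.Adj u v then Hm G v v else 0) := Finset.sum_comm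
      _ = ∑ v, ∑ u, (if G.Adj v u then Hm G v v else 0) := Finset.sum_congr rfl fun v _ =>
            Finset.sum_congr rfl fun u _ => if_congr (G.adj_comm u v) rfl rfl
      _ = ∑ u, (G.degree u : ℝ) * Hm G u u := hS2
  have hS4 : ∑ u, ∑ v, (if G.Adj u v then Hm G u v else 0)
      = ∑ u, ∑ v, (if G.Adj u v then Hm G v u else 0) :=
    Finset.sum_congr rfl fun u _ => Finset.sum_congr rfl fun v _ => by
      rw [Hm_apply_symm G u v]
  have htrace := trace_lap_mul_Hm_expand G
  rw [trace_lap_mul_Hm G] at htrace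
  have hmcast : (G.edgeFinset.card : ℝ) = (G.edgeSet.ncard : ℝ) := by
    rw [Set.ncard_eq_toFinset_card']
    try rfl
  have hcards : ((circuitRank G : ℤ) : ℝ)
      = (G.edgeSet.ncard : ℝ) - (Fintype.card V : ℝ) + (Fintype.card G.ConnectedComponent : ℝ) := by
    rw [circuitRank]
    push_cast [Nat.card_eq_fintype_card]
    ring
  rw [hsplit, hS2, hS3, hS4, sum_ite_adj_one, hcards, hmcast]
  linarith [htrace]
end

section
/- A finite graph G is bipartite if and only if for every vertex u, the vertices (u,0) and (u,1) lie in different connected components of the bipartite double cover K^G. -/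
/-- The bipartite double cover of a graph `G`: vertices are `V × Bool`, and `(x,i)` is
adjacent to `(y,j)` iff `{x,y} ∈ E(G)` and `i ≠ j`. -/
def doubleCover {V : Type*} (G : SimpleGraph V) : SimpleGraph (V × Bool) where
  Adj a b := G.Adj a.1 b.1 ∧ a.2 ≠ b.2
  symm := ⟨fun _ _ h => ⟨h.1.symm, h.2.symm⟩⟩
  loopless := ⟨fun _ h => h.2 rfl⟩

/-! Walks in the double cover are exactly the lifts of walks in `G`, and the `Bool` layer
flips at every step. So `(u, i)` and `(v, j)` are connected iff some `u`-`v` walk in `G` has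
parity `i ≠ j`; in particular `(u, false)` and `(u, true)` are connected iff there is an odd
closed walk at `u`, and a graph is 2-colorable iff it has no odd closed walk. -/

namespace doubleCover

open SimpleGraph

variable {V : Type*} {G : SimpleGraph V}

variable (G) in
def fstHom : doubleCover G →g G where
  toFun := Prod.fst
  map_rel' h := h.1

theorem even_length_iff_snd_eq {a b : V × Bool} (p : (doubleCover G).Walk a b) :
    Even p.length ↔ a.2 = b.2 := by
  induction p with
  | nil => simp
  | @cons x y z h p ih =>
    rw [Walk.length_cons, Nat.even_add_one, ih]
    have flip : ∀ i j k : Bool, i ≠ j → (¬j = k ↔ i = k) := by decide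
    exact flip _ _ _ h.2

theorem adj_not {u v : V} (h : G.Adj u v) (i : Bool) : (doubleCover G).Adj (u, i) (v, !i) :=
  ⟨h, by simp⟩

theorem exists_walk_length_eq {u v : V} (p : G.Walk u v) (i : Bool) :
    ∃ (j : Bool) (q : (doubleCover G).Walk (u, i) (v, j)), q.length = p.length := by
  induction p generalizing i with
  | nil => exact ⟨i, .nil, rfl⟩
  | cons h p ih =>
    obtain ⟨j, q, hq⟩ := ih !i
    exact ⟨j, .cons (adj_not h i) q, by rw [Walk.length_cons, Walk.length_cons, hq]⟩

theorem reachable_iff {u v : V} {i j : Bool} :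
    (doubleCover G).Reachable (u, i) (v, j) ↔ ∃ p : G.Walk u v, (Even p.length ↔ i = j) := by
  constructor
  · rintro ⟨q⟩
    have hq := even_length_iff_snd_eq q
    rw [← q.length_map (fstHom G)] at hq
    exact ⟨q.map (fstHom G), hq⟩
  · rintro ⟨p, hp⟩
    obtain ⟨k, q, hq⟩ := exists_walk_length_eq p i
    have hk : (i = k ↔ i = j) := by rw [← hp, ← hq, even_length_iff_snd_eq]
    have cancel : ∀ i j k : Bool, (i = k ↔ i = j) → k = j := by decide
    obtain rfl := cancel i j k hk
    exact ⟨q⟩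

end doubleCover

theorem bipartite_iff_doubleCover_disconnected_general {V : Type*} (G : SimpleGraph V) :
    G.Colorable 2 ↔ ∀ u : V, ¬ (doubleCover G).Reachable (u, false) (u, true) := by
  simp [SimpleGraph.two_colorable_iff_forall_loop_even, doubleCover.reachable_iff]

/-- A finite graph `G` is bipartite (2-colorable) iff for every vertex `u`, the vertices
`(u, 0)` and `(u, 1)` lie in different connected components of the bipartite double
cover of `G`. -/
theorem bipartite_iff_doubleCover_disconnected {V : Type*} [Fintype V] (G : SimpleGraph V) :
    G.Colorable 2 ↔ ∀ u : V, ¬ (doubleCover G).Reachable (u, false) (u, true) :=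
  bipartite_iff_doubleCover_disconnected_general G
end
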